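/- For a > 1/2, with α = (8a(2a-1))^{1/2} and β = (2(2a-1))^{1/2}, the Kuznetsov-Ma breather B_KM satisfies M[B_KM] = ∫_ℝ (|B_KM(t,x)|² - 1) dx = 4β for every t ∈ ℝ. -/

import Mathlib

open Complex

/-- Partial derivative in the first (time) variable. -/
noncomputable def pdt (u : ℝ → ℝ → ℂ) (t x : ℝ) : ℂ := deriv (fun s => u s x) t

/-- Partial derivative in the second (space) variable. -/
noncomputable def pdx (u : ℝ → ℝ → ℂ) (t x : ℝ) : ℂ := deriv (fun y => u t y) x

/-- `u` solves the cubic focusing NLS `i u_t + u_xx + |u|² u = 0`. -/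
def IsNLSSolution (u : ℝ → ℝ → ℂ) : Prop :=
  ∀ t x : ℝ, Complex.I * pdt u t x + pdx (pdx u) t x
    + ((‖u t x‖ : ℝ) : ℂ)^2 * u t x = 0

/-- Parameter `α` of the Kuznetsov-Ma breather. -/
noncomputable def KMalpha (a : ℝ) : ℝ := Real.sqrt (8 * a * (2 * a - 1))

/-- Parameter `β` of the Kuznetsov-Ma breather. -/
noncomputable def KMbeta (a : ℝ) : ℝ := Real.sqrt (2 * (2 * a - 1))

/-- The Kuznetsov-Ma breather with parameter `a > 1/2`. -/
noncomputable def BKM (a : ℝ) (t x : ℝ) : ℂ :=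
  Complex.exp (Complex.I * t) *
    (1 - Real.sqrt 2 * (KMbeta a) *
      (((KMbeta a : ℂ))^2 * Real.cos (KMalpha a * t)
        + Complex.I * (KMalpha a) * Real.sin (KMalpha a * t)) /
      ((KMalpha a : ℂ) * Real.cosh (KMbeta a * x)
        - (Real.sqrt 2 : ℂ) * (KMbeta a) * Real.cos (KMalpha a * t)))

/-!
The mass density is an exact `x`-derivative: with `c = √2 β cos (α t)`,
`|B_KM|² - 1 = 2αβ ∂ₓ [sinh (β x) / (α cosh (β x) - c)]`, and the denominator stays positive
because `|c| ≤ √2 β < α`. The bracket tends to `±1/α` as `x → ±∞`, so the mass is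
`2αβ · 2/α = 4β`. Integrability comes from the derivative being `O(1 / cosh (β x))`.
-/

open MeasureTheory Filter Topology

lemma Real.inv_cosh_le_four_mul_inv_one_add_sq (y : ℝ) :
    (Real.cosh y)⁻¹ ≤ 4 * (1 + y ^ 2)⁻¹ := by
  have h₁ := Real.quadratic_le_exp_of_nonneg (abs_nonneg y)
  have h₂ := Real.exp_abs_le y
  rw [sq_abs] at h₁
  rw [← div_eq_mul_inv, le_div_iff₀ (by positivity), inv_mul_le_iff₀ (Real.cosh_pos y),
    Real.cosh_eq]
  nlinarith [abs_nonneg y]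

lemma Real.tendsto_inv_cosh_atTop : Tendsto (fun y => (Real.cosh y)⁻¹) atTop (𝓝 0) := by
  refine (tendsto_atTop_mono (fun y => ?_) (Real.tendsto_exp_atTop.atTop_div_const two_pos))
    |>.inv_tendsto_atTop
  rw [Real.cosh_eq]
  linarith [Real.exp_pos (-y)]

noncomputable def massPrimitive (A c y : ℝ) : ℝ := Real.sinh y / (A * Real.cosh y - c)

noncomputable def massDensity (A c y : ℝ) : ℝ :=
  (A - c * Real.cosh y) / (A * Real.cosh y - c) ^ 2

lemma massPrimitive_neg (A c y : ℝ) : massPrimitive A c (-y) = -massPrimitive A c y := by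
  simp only [massPrimitive, Real.sinh_neg, Real.cosh_neg, neg_div]

lemma tendsto_massPrimitive_atTop {A : ℝ} (hA : A ≠ 0) (c : ℝ) :
    Tendsto (massPrimitive A c) atTop (𝓝 A⁻¹) := by
  -- divide through by `cosh y`, using `sinh y = cosh y - exp (-y)`
  have hlim : Tendsto (fun y => (1 - Real.exp (-y) * (Real.cosh y)⁻¹) / (A - c * (Real.cosh y)⁻¹))
      atTop (𝓝 ((1 - 0 * 0) / (A - c * 0))) :=
    ((tendsto_const_nhds.sub (Real.tendsto_exp_neg_atTop_nhds_zero.mul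
      Real.tendsto_inv_cosh_atTop)).div (tendsto_const_nhds.sub
        (Real.tendsto_inv_cosh_atTop.const_mul c)) (by simpa using hA))
  simp only [mul_zero, sub_zero, one_div] at hlim
  refine hlim.congr fun y => ?_
  have hcosh : Real.cosh y ≠ 0 := (Real.cosh_pos y).ne'
  rw [massPrimitive, ← Real.cosh_sub_sinh, sub_mul, mul_inv_cancel₀ hcosh, sub_sub_cancel,
    ← div_div_div_cancel_right₀ hcosh (Real.sinh y), sub_div, mul_div_cancel_right₀ A hcosh,
    div_eq_mul_inv c, div_eq_mul_inv (Real.sinh y)]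

lemma tendsto_massPrimitive_atBot {A : ℝ} (hA : A ≠ 0) (c : ℝ) :
    Tendsto (massPrimitive A c) atBot (𝓝 (-A⁻¹)) := by
  refine ((tendsto_massPrimitive_atTop hA c).comp tendsto_neg_atBot_atTop).neg.congr fun y => ?_
  simp [massPrimitive_neg]

section

variable {A c : ℝ}

lemma mul_cosh_sub_pos (hc : |c| < A) (y : ℝ) : 0 < A * Real.cosh y - c := by
  nlinarith [Real.one_le_cosh y, le_abs_self c, abs_nonneg c]

lemma hasDerivAt_massPrimitive (hc : |c| < A) (y : ℝ) :
    HasDerivAt (massPrimitive A c) (massDensity A c y) y := by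
  have h := (Real.hasDerivAt_sinh y).div ((Real.hasDerivAt_cosh y).const_mul A |>.sub_const c)
    (mul_cosh_sub_pos hc y).ne'
  refine h.congr_deriv ?_
  rw [massDensity, div_eq_div_iff (pow_ne_zero _ (mul_cosh_sub_pos hc y).ne')
    (pow_ne_zero _ (mul_cosh_sub_pos hc y).ne')]
  linear_combination (A * (A * Real.cosh y - c) ^ 2) * Real.cosh_sq_sub_sinh_sq y

lemma abs_massDensity_le (hc : |c| < A) (y : ℝ) :
    |massDensity A c y| ≤ (A + |c|) / (A - |c|) ^ 2 * (Real.cosh y)⁻¹ := by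
  have hch := Real.one_le_cosh y
  have hAc : 0 < A - |c| := sub_pos.mpr hc
  have hnum : |A - c * Real.cosh y| ≤ (A + |c|) * Real.cosh y := by
    rw [abs_le]
    constructor <;> nlinarith [neg_abs_le c, le_abs_self c]
  have hden : (A - |c|) * Real.cosh y ≤ A * Real.cosh y - c := by
    nlinarith [le_abs_self c, abs_nonneg c]
  rw [massDensity, abs_div, abs_of_pos (pow_pos (mul_cosh_sub_pos hc y) 2)]
  calc |A - c * Real.cosh y| / (A * Real.cosh y - c) ^ 2
      ≤ (A + |c|) * Real.cosh y / ((A - |c|) * Real.cosh y) ^ 2 :=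
        div_le_div₀ (by nlinarith [abs_nonneg c]) hnum (by positivity)
          (pow_le_pow_left₀ (by positivity) hden 2)
    _ = (A + |c|) / (A - |c|) ^ 2 * (Real.cosh y)⁻¹ := by
        field_simp

lemma integrable_massDensity (hc : |c| < A) : Integrable (massDensity A c) := by
  refine (integrable_inv_one_add_sq.const_mul (4 * ((A + |c|) / (A - |c|) ^ 2))).mono'
    ?_ (ae_of_all _ fun y => ?_)
  · exact (Continuous.div (by fun_prop) (by fun_prop)
      fun y => pow_ne_zero 2 (mul_cosh_sub_pos hc y).ne').aestronglyMeasurable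
  · have hK : 0 ≤ (A + |c|) / (A - |c|) ^ 2 := by
      have := (abs_nonneg c).trans_lt hc
      positivity
    calc ‖massDensity A c y‖ ≤ (A + |c|) / (A - |c|) ^ 2 * (Real.cosh y)⁻¹ :=
          abs_massDensity_le hc y
      _ ≤ (A + |c|) / (A - |c|) ^ 2 * (4 * (1 + y ^ 2)⁻¹) :=
          mul_le_mul_of_nonneg_left (Real.inv_cosh_le_four_mul_inv_one_add_sq y) hK
      _ = 4 * ((A + |c|) / (A - |c|) ^ 2) * (1 + y ^ 2)⁻¹ := by ring

lemma integral_massDensity (hc : |c| < A) : ∫ y, massDensity A c y = 2 / A := by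
  have hA : A ≠ 0 := ((abs_nonneg c).trans_lt hc).ne'
  rw [integral_of_hasDerivAt_of_tendsto (hasDerivAt_massPrimitive hc) (integrable_massDensity hc)
    (tendsto_massPrimitive_atBot hA c) (tendsto_massPrimitive_atTop hA c)]
  ring

end

lemma Complex.norm_exp_I_mul_one_sub_div_sq (t p q D : ℝ) (hD : D ≠ 0) :
    ‖exp (I * t) * (1 - (p + I * q) / D)‖ ^ 2 = ((D - p) ^ 2 + q ^ 2) / D ^ 2 := by
  have hD' : (D : ℂ) ≠ 0 := ofReal_ne_zero.mpr hD
  have h : (1 - (p + I * q) / D : ℂ) = ((D - p) / D : ℝ) + ((-q) / D : ℝ) * I := by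
    push_cast
    field_simp
    ring
  rw [norm_mul, norm_exp_I_mul_ofReal, one_mul, h, Complex.sq_norm, normSq_add_mul_I]
  field_simp

section

variable {a : ℝ}

lemma KMalpha_sq (ha : 1/2 ≤ a) : KMalpha a ^ 2 = 8 * a * (2 * a - 1) :=
  Real.sq_sqrt (by nlinarith)

lemma KMbeta_sq (ha : 1/2 ≤ a) : KMbeta a ^ 2 = 2 * (2 * a - 1) :=
  Real.sq_sqrt (by linarith)

lemma KMalpha_pos (ha : 1/2 < a) : 0 < KMalpha a :=
  Real.sqrt_pos.mpr (by nlinarith)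

lemma KMbeta_pos (ha : 1/2 < a) : 0 < KMbeta a :=
  Real.sqrt_pos.mpr (by linarith)

lemma sqrt_two_mul_KMbeta_lt_KMalpha (ha : 1/2 < a) : √2 * KMbeta a < KMalpha a := by
  rw [KMbeta, ← Real.sqrt_mul zero_le_two, KMalpha]
  exact Real.sqrt_lt_sqrt (by linarith) (by nlinarith)

lemma abs_sqrt_two_mul_KMbeta_mul_cos_lt (ha : 1/2 < a) (θ : ℝ) :
    |√2 * KMbeta a * Real.cos θ| < KMalpha a := by
  have hpos : 0 < √2 * KMbeta a := mul_pos (by positivity) (KMbeta_pos ha)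
  rw [abs_mul, abs_of_pos hpos]
  exact (mul_le_of_le_one_right hpos.le (Real.abs_cos_le_one θ)).trans_lt
    (sqrt_two_mul_KMbeta_lt_KMalpha ha)

lemma norm_BKM_sq_sub_one (ha : 1/2 < a) (t x : ℝ) :
    ‖BKM a t x‖ ^ 2 - 1 = 2 * KMalpha a * KMbeta a ^ 2 *
      massDensity (KMalpha a) (√2 * KMbeta a * Real.cos (KMalpha a * t)) (KMbeta a * x) := by
  set α := KMalpha a
  set β := KMbeta a
  set c := √2 * β * Real.cos (α * t)
  set ch := Real.cosh (β * x)
  have hD : α * ch - c ≠ 0 :=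
    (mul_cosh_sub_pos (abs_sqrt_two_mul_KMbeta_mul_cos_lt ha (α * t)) (β * x)).ne'
  have hBKM : BKM a t x = exp (I * t) *
      (1 - ((β ^ 2 * c : ℝ) + I * (√2 * β * α * Real.sin (α * t) : ℝ)) / (α * ch - c : ℝ)) := by
    simp only [BKM, c, ch]
    push_cast
    ring
  have hβ4 : β ^ 4 = α ^ 2 - 2 * β ^ 2 := by
    rw [show β ^ 4 = (β ^ 2) ^ 2 by ring, KMbeta_sq ha.le, KMalpha_sq ha.le]
    ring
  rw [hBKM, Complex.norm_exp_I_mul_one_sub_div_sq _ _ _ _ hD, massDensity,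
    div_sub_one (pow_ne_zero 2 hD), mul_div_assoc']
  congr 1
  simp only [c]
  linear_combination (√2 ^ 2 * β ^ 2 * Real.cos (α * t) ^ 2) * hβ4
    + (√2 ^ 2 * β ^ 2 * α ^ 2) * Real.sin_sq_add_cos_sq (α * t)
    + (β ^ 2 * α ^ 2) * Real.sq_sqrt zero_le_two

end

theorem KM_mass (a : ℝ) (ha : 1/2 < a) (t : ℝ) :
    ∫ x : ℝ, ((‖BKM a t x‖)^2 - 1) = 4 * KMbeta a := by
  have hβ := KMbeta_pos ha
  have hα := KMalpha_pos ha
  simp_rw [norm_BKM_sq_sub_one ha t]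
  rw [integral_const_mul, Measure.integral_comp_mul_left (massDensity _ _),
    integral_massDensity (abs_sqrt_two_mul_KMbeta_mul_cos_lt ha _), abs_inv, abs_of_pos hβ,
    smul_eq_mul]
  field_simp
  ring
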